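/- The family {S_α}_{α ∈ Γ} of Kronecker product matrices is a basis of the real symplectic Lie algebra sp(2·2^m): the matrices are linearly independent elements of sp(2·2^m) and their number equals dim sp(2·2^m) = 2·2^{2m} + 2^m. -/

import Mathlib

open Matrix

/-- The real 2×2 Pauli-type matrices indexed by `ZMod 2 × ZMod 2`:
`S_{(0,0)} = I`, `S_{(1,0)} = x`, `S_{(1,1)} = y`, `S_{(0,1)} = z`. -/
noncomputable def S2 : ZMod 2 × ZMod 2 → Matrix (Fin 2) (Fin 2) ℝ := fun a =>
  if a = (0, 0) then 1
  else if a = (1, 0) then !![0, 1; 1, 0]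
  else if a = (1, 1) then !![0, -1; 1, 0]
  else !![1, 0; 0, -1]

/-- The `(m+1)`-fold Kronecker product `S_α = S_{a₀} ⊗ ⋯ ⊗ S_{a_m}`, realized as a
matrix indexed by functions `Fin (m+1) → Fin 2`. -/
noncomputable def Sfun (m : ℕ) (α : Fin (m + 1) → ZMod 2 × ZMod 2) :
    Matrix (Fin (m + 1) → Fin 2) (Fin (m + 1) → Fin 2) ℝ :=
  Matrix.of fun v w => ∏ j, S2 (α j) (v j) (w j)

/-- The symplectic inner product on `ZMod 2 × ZMod 2`. -/
def sp2 (a b : ZMod 2 × ZMod 2) : ZMod 2 := a.1 * b.2 + a.2 * b.1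

/-- The symplectic form `J = -(y ⊗ I^{⊗m})`. -/
noncomputable def Jmat (m : ℕ) :
    Matrix (Fin (m + 1) → Fin 2) (Fin (m + 1) → Fin 2) ℝ :=
  -(Sfun m fun j => if j = 0 then ((1 : ZMod 2), (1 : ZMod 2)) else (0, 0))

/-- The number of components of `α` equal to `(1,1)`. -/
def deltaCount (m : ℕ) (α : Fin (m + 1) → ZMod 2 × ZMod 2) : ℕ :=
  (Finset.univ.filter fun j => α j = ((1 : ZMod 2), (1 : ZMod 2))).card

/-- The index set `Γ` of the basis of `sp(2·2^m)`. -/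
def GammaSet (m : ℕ) : Finset (Fin (m + 1) → ZMod 2 × ZMod 2) :=
  Finset.univ.filter fun α =>
    Odd (deltaCount m α + if α 0 = (0, 1) ∨ α 0 = (1, 0) then 1 else 0)

/-!
Write `-J = y ⊗ I ⊗ ⋯ ⊗ I`. Kronecker products of `2 × 2` matrices multiply, transpose and take
traces factorwise. Since `x`, `y`, `z` anticommute with `y` and `y` is the only antisymmetric `S_a`,
every factor satisfies `S_aᵀ J_j = ± J_j S_a`, so `S_αᵀ J = ε(α) J S_α` with
`ε(α) = (-1)^(δ(α) + [a₀ ∈ {x, z}])`; hence `S_α ∈ sp` exactly when `α ∈ Γ`.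

The `S_a` are orthogonal for `⟨A, B⟩ = tr (Aᵀ B)`, hence so are the `S_α`, which are therefore
linearly independent. Finally `∑_α ε(α) = ∏_j ∑_a ε_j(a) = -2 · 2^m`, while the same sum is
`4^(m+1) - 2 |Γ|`.
-/

namespace Matrix

variable {ι n R : Type*} [Fintype ι] [CommSemiring R]

def piKronecker (M : ι → Matrix n n R) : Matrix (ι → n) (ι → n) R :=
  of fun v w => ∏ i, M i (v i) (w i)

theorem transpose_piKronecker (M : ι → Matrix n n R) :
    (piKronecker M)ᵀ = piKronecker fun i => (M i)ᵀ :=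
  rfl

theorem piKronecker_smul (c : ι → R) (M : ι → Matrix n n R) :
    piKronecker (fun i => c i • M i) = (∏ i, c i) • piKronecker M := by
  ext v w
  simp only [piKronecker, of_apply, smul_apply, smul_eq_mul, Finset.prod_mul_distrib]

variable [DecidableEq ι] [Fintype n]

theorem piKronecker_mul (M N : ι → Matrix n n R) :
    piKronecker M * piKronecker N = piKronecker fun i => M i * N i := by
  ext v w
  simp only [piKronecker, mul_apply, of_apply, Fintype.prod_sum, Finset.prod_mul_distrib]

theorem trace_piKronecker (M : ι → Matrix n n R) :
    trace (piKronecker M) = ∏ i, trace (M i) := by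
  simp only [trace, diag, piKronecker, of_apply, Fintype.prod_sum]

end Matrix

theorem linearIndependent_of_biorthogonal {ι R M : Type*} [CommRing R] [IsDomain R] [AddCommGroup M]
    [Module R M] {v : ι → M} (f : ι → M →ₗ[R] R) (h_diag : ∀ i, f i (v i) ≠ 0)
    (h_offdiag : ∀ i j, i ≠ j → f i (v j) = 0) : LinearIndependent R v := by
  classical
  have h_comp : ⇑(LinearMap.pi f) ∘ v = fun j => Pi.single j (f j (v j)) := by
    ext j i
    by_cases hij : i = j
    · subst hij; simp
    · simp [hij, h_offdiag i j hij]
  exact .of_comp (LinearMap.pi f) (h_comp ▸ Pi.linearIndependent_single_of_ne_zero h_diag)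

theorem Finset.sum_ite_mem_neg_one_one {α : Type*} [Fintype α] [DecidableEq α] (s : Finset α) :
    ∑ x, (if x ∈ s then -1 else 1 : ℤ) = Fintype.card α - 2 * s.card := by
  have h_total : (s.card + sᶜ.card : ℤ) = Fintype.card α := by
    exact_mod_cast Finset.card_add_card_compl s
  have h_compl : Finset.univ.filter (· ∉ s) = sᶜ := by ext; simp
  simp only [Finset.sum_ite, Finset.sum_const, Finset.filter_mem_eq_inter, Finset.univ_inter,
    h_compl, smul_neg, nsmul_eq_mul, mul_one]
  linarith

theorem ZMod.two_prod_cases (a : ZMod 2 × ZMod 2) :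
    a = (0, 0) ∨ a = (0, 1) ∨ a = (1, 0) ∨ a = (1, 1) := by
  revert a; decide

@[simp] theorem S2_zero_zero : S2 (0, 0) = 1 := rfl
@[simp] theorem S2_one_zero : S2 (1, 0) = !![0, 1; 1, 0] := rfl
@[simp] theorem S2_one_one : S2 (1, 1) = !![0, -1; 1, 0] := rfl
@[simp] theorem S2_zero_one : S2 (0, 1) = !![1, 0; 0, -1] := rfl

theorem trace_transpose_S2_mul_S2 (a b : ZMod 2 × ZMod 2) :
    trace ((S2 a)ᵀ * S2 b) = if a = b then 2 else 0 := by
  rcases ZMod.two_prod_cases a with rfl | rfl | rfl | rfl <;>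
  rcases ZMod.two_prod_cases b with rfl | rfl | rfl | rfl <;>
  norm_num [trace, Fin.sum_univ_two, mul_apply, one_apply]

def signExp {m : ℕ} (j : Fin (m + 1)) (a : ZMod 2 × ZMod 2) : ℕ :=
  (if a = (1, 1) then 1 else 0) + if j = 0 ∧ (a = (0, 1) ∨ a = (1, 0)) then 1 else 0

def Jindex (m : ℕ) : Fin (m + 1) → ZMod 2 × ZMod 2 :=
  fun j => if j = 0 then (1, 1) else (0, 0)

theorem Jmat_eq_neg_Sfun (m : ℕ) : Jmat m = -Sfun m (Jindex m) :=
  rfl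

theorem transpose_S2_mul_S2_Jindex {m : ℕ} (j : Fin (m + 1)) (a : ZMod 2 × ZMod 2) :
    (S2 a)ᵀ * S2 (Jindex m j) = (-1 : ℝ) ^ signExp j a • (S2 (Jindex m j) * S2 a) := by
  by_cases hj : j = 0 <;> rcases ZMod.two_prod_cases a with rfl | rfl | rfl | rfl <;>
    ext k l <;> fin_cases k <;> fin_cases l <;>
    norm_num [hj, Jindex, signExp, Fin.sum_univ_two, mul_apply, one_apply]

theorem sum_signExp {m : ℕ} (α : Fin (m + 1) → ZMod 2 × ZMod 2) :
    ∑ j, signExp j (α j) = deltaCount m α + if α 0 = (0, 1) ∨ α 0 = (1, 0) then 1 else 0 := by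
  rw [deltaCount, Finset.card_filter]
  simp only [signExp, Finset.sum_add_distrib, ite_and, Finset.sum_ite_eq', Finset.mem_univ, if_true]

theorem mem_GammaSet_iff {m : ℕ} (α : Fin (m + 1) → ZMod 2 × ZMod 2) :
    α ∈ GammaSet m ↔ Odd (∑ j, signExp j (α j)) := by
  simp [GammaSet, sum_signExp]

theorem prod_neg_one_pow_signExp {R : Type*} [CommRing R] {m : ℕ}
    (α : Fin (m + 1) → ZMod 2 × ZMod 2) :
    ∏ j, (-1 : R) ^ signExp j (α j) = if α ∈ GammaSet m then -1 else 1 := by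
  rw [Finset.prod_pow_eq_pow_sum]
  split_ifs with h <;> rw [mem_GammaSet_iff] at h
  · exact h.neg_one_pow
  · exact (Nat.not_odd_iff_even.mp h).neg_one_pow

theorem Sfun_eq_piKronecker (m : ℕ) (α : Fin (m + 1) → ZMod 2 × ZMod 2) :
    Sfun m α = piKronecker fun j => S2 (α j) :=
  rfl

theorem transpose_Sfun_mul_Jmat (m : ℕ) (α : Fin (m + 1) → ZMod 2 × ZMod 2) :
    (Sfun m α)ᵀ * Jmat m = (if α ∈ GammaSet m then (-1 : ℝ) else 1) • (Jmat m * Sfun m α) := by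
  simp only [Jmat_eq_neg_Sfun, Sfun_eq_piKronecker, mul_neg, neg_mul, transpose_piKronecker,
    piKronecker_mul, transpose_S2_mul_S2_Jindex, piKronecker_smul, prod_neg_one_pow_signExp,
    smul_neg]

theorem trace_transpose_Sfun_mul_Sfun (m : ℕ) (α β : Fin (m + 1) → ZMod 2 × ZMod 2) :
    trace ((Sfun m α)ᵀ * Sfun m β) = if α = β then 2 ^ (m + 1) else 0 := by
  simp only [Sfun_eq_piKronecker, transpose_piKronecker, piKronecker_mul, trace_piKronecker,
    trace_transpose_S2_mul_S2, Finset.prod_ite_zero, funext_iff]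
  simp

theorem linearIndependent_Sfun (m : ℕ) : LinearIndependent ℝ (Sfun m) := by
  refine linearIndependent_of_biorthogonal
    (fun β => traceLinearMap _ ℝ ℝ ∘ₗ LinearMap.mulLeft ℝ (Sfun m β)ᵀ) (fun α => ?_) ?_
  · simp [trace_transpose_Sfun_mul_Sfun]
  · intro α β hαβ
    simp [trace_transpose_Sfun_mul_Sfun, hαβ]

theorem sum_neg_one_pow_signExp {m : ℕ} (j : Fin (m + 1)) :
    ∑ a, (-1 : ℤ) ^ signExp j a = if j = 0 then -2 else 2 := by
  by_cases hj : j = 0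
  · subst hj
    simp only [signExp, true_and, if_true]
    decide
  · simp only [signExp, hj, false_and, if_false, add_zero]
    decide

theorem sum_sign_GammaSet (m : ℕ) :
    ∑ α : Fin (m + 1) → ZMod 2 × ZMod 2, (if α ∈ GammaSet m then -1 else 1 : ℤ) = -2 * 2 ^ m :=
  calc _ = ∑ α : Fin (m + 1) → ZMod 2 × ZMod 2, ∏ j, (-1 : ℤ) ^ signExp j (α j) := by
        simp only [prod_neg_one_pow_signExp]
    _ = ∏ j, ∑ a, (-1 : ℤ) ^ signExp j a :=
        (Fintype.prod_sum fun j a => (-1 : ℤ) ^ signExp j a).symm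
    _ = -2 * 2 ^ m := by simp [Fin.prod_univ_succ, sum_neg_one_pow_signExp, Fin.succ_ne_zero]

theorem card_GammaSet (m : ℕ) : (GammaSet m).card = 2 * 2 ^ (2 * m) + 2 ^ m := by
  have h_sign_sum := sum_sign_GammaSet m
  rw [Finset.sum_ite_mem_neg_one_one, Fintype.card_fun, Fintype.card_prod, ZMod.card,
    Fintype.card_fin] at h_sign_sum
  have h_four : ((2 * 2) ^ (m + 1) : ℕ) = (4 * 2 ^ (2 * m) : ℤ) := by
    push_cast; rw [pow_succ, pow_mul]; ring
  have h_card : ((GammaSet m).card : ℤ) = 2 * 2 ^ (2 * m) + 2 ^ m := by linarith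
  exact_mod_cast h_card

/-- The family `{S_α}_{α ∈ Γ}` is a basis of `sp(2·2^m)`: each member lies in the
symplectic Lie algebra, the family is linearly independent, and its cardinality
equals `dim sp(2·2^m) = 2·2^{2m} + 2^m`. -/
theorem stmt7 (m : ℕ) :
    (∀ α ∈ GammaSet m, (Sfun m α)ᵀ * Jmat m + Jmat m * Sfun m α = 0) ∧
    LinearIndependent ℝ (fun α : {α // α ∈ GammaSet m} => Sfun m α.val) ∧
    (GammaSet m).card = 2 * 2 ^ (2 * m) + 2 ^ m :=
  ⟨fun α hα => by rw [transpose_Sfun_mul_Jmat, if_pos hα, neg_one_smul, neg_add_cancel],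
    (linearIndependent_Sfun m).comp Subtype.val Subtype.val_injective, card_GammaSet m⟩
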